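/- Suppose the sequences are generated by Algorithm I, and assume v0 ≠ x* if p ≥ 2. Then for every integer k ≥ 1: A_k ≥ (θ·(1 − σ²)^{(p−1)/2} / ((p+1)^{(3p+1)/2}·‖v0 − x*‖^{p−1}))·k^{(3p+1)/2}. -/

import Mathlib

/-!
Three facts about the iterates drive the estimate. The Lyapunov function
`A k * (Φ (x k) - Φ x*) + ‖v k - x*‖² / 2` drops in each step by at least
`(1 - σ²) / 2 * A (k+1) / λ (k+1) * ‖x (k+1) - ṽ k‖²`, so these terms sum to at most
`‖v 0 - x*‖² / 2`; the rule `a² = λ (A + a)` gives `√A (k+1) ≥ √A k + √λ (k+1) / 2`, so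
`∑ √λ ≤ 2 √A k`; and the large-step condition bounds `λ (k+1) * ‖x (k+1) - ṽ k‖ ^ (p-1)`
below by `θ`. For `p = 1` the last two facts give `A k ≥ θ k² / 4`. For `p ≥ 2`, Hölder's
inequality with exponents `1 / (2β)` and `1 / α`, where `α = (p-1)/(3p+1)` and
`β = (p+1)/(3p+1)`, combines them into `∑_{j ≤ k} A j ^ α ≤ D * A k ^ β`. The partial sums `S`
of `A j ^ α` then satisfy the discrete differential inequality `ΔS ≥ c S ^ (α/β)`; by concavity
of `t ↦ t ^ (1 - α/β)` this integrates to `S k ^ (1 - α/β) ≳ k`, whence `A k ^ (β - α) ≳ k`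
with `1 / (β - α) = (3p+1)/2`.
-/

open scoped RealInnerProductSpace
open Finset

lemma sum_range_le_sub_of_add_le {E T : ℕ → ℝ} (h : ∀ k, E (k + 1) + T k ≤ E k) (n : ℕ) :
    ∑ k ∈ range n, T k ≤ E 0 - E n := by
  rw [← sum_range_sub']
  exact sum_le_sum fun k _ => by linarith [h k]

lemma mul_rpow_sub_one_mul_sub_le_rpow_sub_rpow {a b r : ℝ} (ha : 0 < a) (hb : 0 ≤ b)
    (hr₀ : 0 ≤ r) (hr₁ : r ≤ 1) : r * a ^ (r - 1) * (a - b) ≤ a ^ r - b ^ r := by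
  have amgm := Real.geom_mean_le_arith_mean2_weighted hr₀ (sub_nonneg.2 hr₁) hb ha.le
    (add_sub_cancel r 1)
  have hinv : a ^ (1 - r) * a ^ (r - 1) = 1 := by rw [← Real.rpow_add ha]; simp
  have hmul : a ^ (r - 1) * a = a ^ r := by rw [← Real.rpow_add_one ha.ne']; ring_nf
  have := mul_le_mul_of_nonneg_right amgm (Real.rpow_nonneg ha.le (r - 1))
  rw [mul_assoc, hinv, mul_one] at this
  linear_combination this + hmul

lemma mul_le_rpow_of_mul_rpow_le_sub {S : ℕ → ℝ} {c γ : ℝ} (hγ₀ : 0 ≤ γ)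
    (hγ₁ : γ < 1) (hS₀ : S 0 = 0) (hS : ∀ k, 0 < S (k + 1))
    (hstep : ∀ k, c * S (k + 1) ^ γ ≤ S (k + 1) - S k) (n : ℕ) :
    (1 - γ) * c * n ≤ S n ^ (1 - γ) := by
  have hincr : ∀ k, (1 - γ) * c ≤ S (k + 1) ^ (1 - γ) - S k ^ (1 - γ) := fun k => by
    have hSk : 0 ≤ S k := by cases k with
      | zero => exact hS₀.ge
      | succ k => exact (hS k).le
    have hcancel : S (k + 1) ^ (1 - γ - 1) * S (k + 1) ^ γ = 1 := by
      rw [← Real.rpow_add (hS k)]; simp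
    calc (1 - γ) * c = (1 - γ) * S (k + 1) ^ (1 - γ - 1) * (c * S (k + 1) ^ γ) := by
          linear_combination (1 - γ) * c * hcancel.symm
      _ ≤ (1 - γ) * S (k + 1) ^ (1 - γ - 1) * (S (k + 1) - S k) := by
          gcongr
          · exact mul_nonneg (by linarith) (Real.rpow_nonneg (hS k).le _)
          · exact hstep k
      _ ≤ _ := mul_rpow_sub_one_mul_sub_le_rpow_sub_rpow (hS k) hSk (by linarith) (by linarith)
  have := sum_range_le_sub_of_add_le (E := fun k => -S k ^ (1 - γ)) (T := fun _ => (1 - γ) * c)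
    (fun k => by linarith [hincr k]) n
  simpa [hS₀, Real.zero_rpow (by linarith : 1 - γ ≠ 0), mul_comm] using this

lemma sum_rpow_mul_rpow_le {ι : Type*} (s : Finset ι) {f g : ι → ℝ} (hf : ∀ i ∈ s, 0 ≤ f i)
    (hg : ∀ i ∈ s, 0 ≤ g i) {a b : ℝ} (ha : 0 < a) (hb : 0 < b) (hab : a + b = 1) :
    ∑ i ∈ s, f i ^ a * g i ^ b ≤ (∑ i ∈ s, f i) ^ a * (∑ i ∈ s, g i) ^ b := by
  have := Real.inner_le_Lp_mul_Lq_of_nonneg s (Real.HolderConjugate.inv_inv ha hb hab)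
    (f := fun i => f i ^ a) (g := fun i => g i ^ b)
    (fun i hi => Real.rpow_nonneg (hf i hi) a) (fun i hi => Real.rpow_nonneg (hg i hi) b)
  have hsum : ∀ (h : ι → ℝ) (c : ℝ), 0 < c → (∀ i ∈ s, 0 ≤ h i) →
      ∑ i ∈ s, (h i ^ c) ^ c⁻¹ = ∑ i ∈ s, h i := fun h c hc hh =>
    sum_congr rfl fun i hi => Real.rpow_rpow_inv (hh i hi) hc.ne'
  rwa [hsum f a ha hf, hsum g b hb hg, one_div, one_div, inv_inv, inv_inv] at this

lemma mul_le_rpow_of_sum_rpow_le {y : ℕ → ℝ} {α β D : ℝ} (hα : 0 ≤ α) (hαβ : α < β)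
    (hD : 0 < D) (hy : ∀ k, 0 < y (k + 1))
    (h : ∀ k, ∑ j ∈ range k, y (j + 1) ^ α ≤ D * y k ^ β) (k : ℕ) :
    (β - α) / (β * D) * (k + 1) ≤ y (k + 1) ^ (β - α) := by
  have hβ : 0 < β := hα.trans_lt hαβ
  set S : ℕ → ℝ := fun n => ∑ j ∈ range n, y (j + 1) ^ α with hS
  have hSpos : ∀ n, 0 < S (n + 1) := fun n => by
    simp only [hS, sum_range_succ]
    exact add_pos_of_nonneg_of_pos (sum_nonneg fun j _ => Real.rpow_nonneg (hy j).le α)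
      (Real.rpow_pos_of_pos (hy n) α)
  have hSle : ∀ n, S (n + 1) / D ≤ y (n + 1) ^ β := fun n => by
    rw [div_le_iff₀' hD]; exact h (n + 1)
  have hstep : ∀ n, D ^ (-(α / β)) * S (n + 1) ^ (α / β) ≤ S (n + 1) - S n := fun n => by
    have hdiff : S (n + 1) - S n = y (n + 1) ^ α := by simp only [hS, sum_range_succ]; ring
    rw [hdiff, Real.rpow_neg hD.le, ← div_eq_inv_mul, ← Real.div_rpow (hSpos n).le hD.le]
    calc (S (n + 1) / D) ^ (α / β) ≤ (y (n + 1) ^ β) ^ (α / β) :=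
          Real.rpow_le_rpow (by have := hSpos n; positivity) (hSle n) (by positivity)
      _ = y (n + 1) ^ α := by rw [← Real.rpow_mul (hy n).le, mul_div_cancel₀ _ hβ.ne']
  have hrec := mul_le_rpow_of_mul_rpow_le_sub (div_nonneg hα hβ.le)
    ((div_lt_one hβ).2 hαβ) (by simp [hS]) hSpos hstep (k + 1)
  have hexp : 1 - α / β = (β - α) / β := by field_simp
  calc (β - α) / (β * D) * (k + 1)
        = (1 - α / β) * D ^ (-(α / β)) * (k + 1 : ℕ) * D ^ (α / β - 1) := by
        rw [Real.rpow_sub hD, Real.rpow_neg hD.le, Real.rpow_one, hexp]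
        push_cast
        field_simp [(Real.rpow_pos_of_pos hD (α / β)).ne']
    _ ≤ S (k + 1) ^ (1 - α / β) * D ^ (α / β - 1) := by gcongr
    _ = (S (k + 1) / D) ^ (1 - α / β) := by
        rw [Real.div_rpow (hSpos k).le hD.le, show α / β - 1 = -(1 - α / β) by ring,
          Real.rpow_neg hD.le, ← div_eq_mul_inv]
    _ ≤ (y (k + 1) ^ β) ^ (1 - α / β) :=
        Real.rpow_le_rpow (by have := hSpos k; positivity) (hSle k)
          (by rw [hexp]; exact div_nonneg (sub_nonneg.2 hαβ.le) hβ.le)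
    _ = y (k + 1) ^ (β - α) := by
        rw [← Real.rpow_mul (hy k).le, hexp, mul_div_cancel₀ _ hβ.ne']

lemma weighted_subgradient_le {E : Type*} [NormedAddCommGroup E] [InnerProductSpace ℝ E]
    {Φ : E → ℝ} {A a eps : ℝ} {x x' v vt w xstar : E} (hA : 0 ≤ A) (ha : 0 ≤ a)
    (hmean : (A + a) • vt = A • x + a • v) (hw : ∀ y, Φ x' + ⟪y - x', w⟫ - eps ≤ Φ y) :
    (A + a) * (Φ x' - ⟪x' - vt, w⟫ - eps) - a * ⟪v - xstar, w⟫ ≤ A * Φ x + a * Φ xstar := by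
  have hx := mul_le_mul_of_nonneg_left (hw x) hA
  have hxstar := mul_le_mul_of_nonneg_left (hw xstar) ha
  have hinner := congrArg (⟪·, w⟫) hmean
  simp only [inner_add_left, inner_sub_left, real_inner_smul_left] at hinner hx hxstar ⊢
  linear_combination hx + hxstar + hinner

lemma lyapunov_step {E : Type*} [NormedAddCommGroup E] [InnerProductSpace ℝ E] {Φ : E → ℝ}
    {σ A A' a lam eps : ℝ} {x x' v v' vt w xstar : E}
    (hA : 0 ≤ A) (ha : 0 < a) (hlam : 0 < lam) (hA' : A' = A + a)
    (haA : a ^ 2 = lam * (A + a)) (hvt : vt = (A / A') • x + (a / A') • v)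
    (hw : ∀ y, Φ x' + ⟪y - x', w⟫ - eps ≤ Φ y)
    (herr : ‖lam • w + x' - vt‖ ^ 2 + 2 * lam * eps ≤ σ ^ 2 * ‖x' - vt‖ ^ 2)
    (hv : v' = v - a • w) :
    A' * (Φ x' - Φ xstar) + ‖v' - xstar‖ ^ 2 / 2 + (1 - σ ^ 2) / 2 * (A' / lam * ‖x' - vt‖ ^ 2)
      ≤ A * (Φ x - Φ xstar) + ‖v - xstar‖ ^ 2 / 2 := by
  subst hA' hv
  have hAa : 0 < A + a := by linarith
  have hmean : (A + a) • vt = A • x + a • v := by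
    rw [hvt, smul_add, smul_smul, smul_smul, mul_div_cancel₀ _ hAa.ne',
      mul_div_cancel₀ _ hAa.ne']
  have hsub := weighted_subgradient_le (xstar := xstar) hA ha.le hmean hw
  have hv' : ‖v - a • w - xstar‖ ^ 2
      = ‖v - xstar‖ ^ 2 - 2 * a * ⟪v - xstar, w⟫ + lam * (A + a) * ‖w‖ ^ 2 := by
    rw [sub_right_comm, norm_sub_sq_real, real_inner_smul_right, norm_smul, mul_pow,
      Real.norm_eq_abs, sq_abs, haA]
    ring
  have herr' : ‖x' - vt‖ ^ 2 + 2 * lam * ⟪x' - vt, w⟫ + lam ^ 2 * ‖w‖ ^ 2 + 2 * lam * eps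
      ≤ σ ^ 2 * ‖x' - vt‖ ^ 2 := by
    rw [add_sub_assoc, norm_add_sq_real, real_inner_smul_left, norm_smul, mul_pow,
      Real.norm_eq_abs, sq_abs, real_inner_comm] at herr
    linarith
  have hscaled : (1 - σ ^ 2) / 2 * ((A + a) / lam * ‖x' - vt‖ ^ 2)
      + (A + a) * (⟪x' - vt, w⟫ + eps + lam * ‖w‖ ^ 2 / 2) ≤ 0 := by
    have hfactor : (1 - σ ^ 2) / 2 * ((A + a) / lam * ‖x' - vt‖ ^ 2)
        + (A + a) * (⟪x' - vt, w⟫ + eps + lam * ‖w‖ ^ 2 / 2)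
        = (A + a) / (2 * lam) * (‖x' - vt‖ ^ 2 + 2 * lam * ⟪x' - vt, w⟫ + lam ^ 2 * ‖w‖ ^ 2
          + 2 * lam * eps - σ ^ 2 * ‖x' - vt‖ ^ 2) := by
      field_simp
      ring
    rw [hfactor]
    exact mul_nonpos_of_nonneg_of_nonpos (by positivity) (by linarith)
  rw [hv']
  linear_combination hsub + hscaled

lemma sqrt_add_sqrt_div_two_le {A a lam : ℝ} (hA : 0 ≤ A) (ha : 0 < a) (hlam : 0 ≤ lam)
    (haA : a ^ 2 = lam * (A + a)) : √A + √lam / 2 ≤ √(A + a) := by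
  have hpos : 0 < √(A + a) := Real.sqrt_pos.2 (by linarith)
  have hle : √A ≤ √(A + a) := Real.sqrt_le_sqrt (by linarith)
  have hdiff : (√(A + a) - √A) * (√(A + a) + √A) = √lam * √(A + a) := by
    rw [← Real.sqrt_mul hlam, ← haA, Real.sqrt_sq ha.le]
    nlinarith [Real.sq_sqrt hA, Real.sq_sqrt (by linarith : 0 ≤ A + a)]
  have : √lam * √(A + a) ≤ 2 * (√(A + a) - √A) * √(A + a) := by
    rw [← hdiff]; nlinarith
  linarith [le_of_mul_le_mul_right this hpos]

lemma rpow_mul_rpow_le_of_le_mul_rpow {q θ l s A : ℝ} (hq : 0 < q) (hθ : 0 ≤ θ) (hl : 0 < l)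
    (hs : 0 ≤ s) (hA : 0 ≤ A) (h : θ ≤ l * s ^ (2 * q)) :
    θ ^ (3 * q + 2)⁻¹ * A ^ (q / (3 * q + 2))
      ≤ √l ^ (2 * ((q + 1) / (3 * q + 2))) * (A / l * s ^ 2) ^ (q / (3 * q + 2)) := by
  set m := 3 * q + 2
  set α := q / m with hα
  set β := (q + 1) / m with hβ
  have hβα : β - α = m⁻¹ := by rw [hα, hβ, ← sub_div]; simp
  calc θ ^ m⁻¹ * A ^ α ≤ (l * s ^ (2 * q)) ^ m⁻¹ * A ^ α := by gcongr
    _ = l ^ β / l ^ α * (s ^ 2) ^ α * A ^ α := by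
        rw [Real.mul_rpow hl.le (by positivity), ← Real.rpow_mul hs,
          show 2 * q * m⁻¹ = ((2 : ℕ) : ℝ) * α by rw [hα]; push_cast; ring,
          Real.rpow_mul hs, Real.rpow_natCast, ← hβα, Real.rpow_sub hl]
    _ = _ := by
        rw [Real.sqrt_eq_rpow, ← Real.rpow_mul hl.le, Real.mul_rpow (by positivity) (by positivity),
          Real.div_rpow hA hl.le]
        ring_nf

lemma rpow_mul_sum_rpow_le {q θ M : ℝ} (hq : 0 < q) (hθ : 0 ≤ θ) {A lam s : ℕ → ℝ}
    (hA : ∀ k, 0 ≤ A k) (hlam : ∀ k, 0 < lam (k + 1)) (hs : ∀ k, 0 ≤ s k)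
    (hls : ∀ k, θ ≤ lam (k + 1) * s k ^ (2 * q))
    (hsum : ∀ k, ∑ j ∈ range k, A (j + 1) / lam (j + 1) * s j ^ 2 ≤ M)
    (hsqrt : ∀ k, ∑ j ∈ range k, √(lam (j + 1)) ≤ 2 * √(A k)) (k : ℕ) :
    θ ^ (3 * q + 2)⁻¹ * ∑ j ∈ range k, A (j + 1) ^ (q / (3 * q + 2))
      ≤ 2 * M ^ (q / (3 * q + 2)) * A k ^ ((q + 1) / (3 * q + 2)) := by
  set m := 3 * q + 2 with hm
  set α := q / m with hα
  set β := (q + 1) / m with hβ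
  have hm_pos : 0 < m := by positivity
  have hα_pos : 0 < α := by positivity
  have h₁ : 0 ≤ ∑ j ∈ range k, √(lam (j + 1)) := sum_nonneg fun j _ => Real.sqrt_nonneg _
  have h₂ : 0 ≤ ∑ j ∈ range k, A (j + 1) / lam (j + 1) * s j ^ 2 :=
    sum_nonneg fun j _ => by have := hA (j + 1); have := hlam j; positivity
  have h4 : (4 : ℝ) ^ β ≤ 2 := calc
    (4 : ℝ) ^ β ≤ 4 ^ (1 / 2 : ℝ) :=
      Real.rpow_le_rpow_of_exponent_le (by norm_num) (by rw [hβ, div_le_iff₀ hm_pos]; linarith)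
    _ = 2 := by rw [show (4 : ℝ) = 2 ^ (2 : ℝ) by norm_num, ← Real.rpow_mul zero_le_two]; norm_num
  rw [mul_sum]
  calc ∑ j ∈ range k, θ ^ m⁻¹ * A (j + 1) ^ α
      ≤ ∑ j ∈ range k, √(lam (j + 1)) ^ (2 * β) * (A (j + 1) / lam (j + 1) * s j ^ 2) ^ α :=
        sum_le_sum fun j _ => rpow_mul_rpow_le_of_le_mul_rpow hq hθ (hlam j) (hs j) (hA _) (hls j)
    _ ≤ (∑ j ∈ range k, √(lam (j + 1))) ^ (2 * β)
          * (∑ j ∈ range k, A (j + 1) / lam (j + 1) * s j ^ 2) ^ α :=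
        sum_rpow_mul_rpow_le _ (fun j _ => Real.sqrt_nonneg _)
          (fun j _ => by have := hA (j + 1); have := hlam j; positivity)
          (by positivity) hα_pos (by rw [hα, hβ, hm]; field_simp; ring)
    _ ≤ (2 * √(A k)) ^ (2 * β) * M ^ α :=
        mul_le_mul (Real.rpow_le_rpow h₁ (hsqrt k) (by positivity))
          (Real.rpow_le_rpow h₂ (hsum k) hα_pos.le) (by positivity) (by positivity)
    _ = 4 ^ β * A k ^ β * M ^ α := by
        rw [Real.mul_rpow zero_le_two (Real.sqrt_nonneg _), Real.rpow_mul zero_le_two,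
          Real.sqrt_eq_rpow, ← Real.rpow_mul (hA k), show (1 / 2 : ℝ) * (2 * β) = β by ring]
        norm_num
    _ ≤ 2 * A k ^ β * M ^ α := by
        have := Real.rpow_nonneg (hA k) β
        have := Real.rpow_nonneg (h₂.trans (hsum k)) α
        gcongr
    _ = 2 * M ^ α * A k ^ β := by ring

lemma mul_rpow_le_of_large_step {p : ℕ} (hp : 2 ≤ p) {θ R g : ℝ} (hθ : 0 < θ) (hR : 0 < R)
    (hg : 0 < g) {A lam s : ℕ → ℝ} (hA : ∀ k, 0 ≤ A k) (hApos : ∀ k, 0 < A (k + 1))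
    (hlam : ∀ k, 0 < lam (k + 1)) (hs : ∀ k, 0 ≤ s k)
    (hls : ∀ k, θ ≤ lam (k + 1) * s k ^ (p - 1))
    (hsum : ∀ k, ∑ j ∈ range k, A (j + 1) / lam (j + 1) * s j ^ 2 ≤ R ^ 2 / g)
    (hsqrt : ∀ k, ∑ j ∈ range k, √(lam (j + 1)) ≤ 2 * √(A k)) (k : ℕ) :
    θ * g ^ (((p : ℝ) - 1) / 2) / (((p : ℝ) + 1) ^ ((3 * (p : ℝ) + 1) / 2) * R ^ (p - 1)) *
      ((k + 1 : ℕ) : ℝ) ^ ((3 * (p : ℝ) + 1) / 2) ≤ A (k + 1) := by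
  set q : ℝ := ((p : ℝ) - 1) / 2 with hq
  have hq_pos : 0 < q := by
    rw [hq]; linarith [show (2 : ℝ) ≤ p by exact_mod_cast hp]
  have hm : (3 * (p : ℝ) + 1) / 2 = 3 * q + 2 := by rw [hq]; ring
  have hp1 : (p : ℝ) + 1 = 2 * (q + 1) := by rw [hq]; ring
  set m := 3 * q + 2
  set α := q / m with hα
  set β := (q + 1) / m with hβ
  have hm_pos : 0 < m := by positivity
  have hpow : ∀ t : ℝ, 0 ≤ t → t ^ (2 * q) = t ^ (p - 1) := fun t ht => by
    rw [← Real.rpow_natCast, Nat.cast_sub (by omega), hq]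
    push_cast
    ring_nf
  have hD : 0 < 2 * (R ^ 2 / g) ^ α / θ ^ m⁻¹ := by positivity
  have hgrowth := mul_le_rpow_of_sum_rpow_le (α := α) (β := β) (by positivity)
    (div_lt_div_of_pos_right (by linarith) hm_pos) hD hApos
    (fun k => by
      rw [div_mul_eq_mul_div, le_div_iff₀' (by positivity)]
      exact rpow_mul_sum_rpow_le hq_pos hθ.le hA hlam hs
        (fun k => (hpow _ (hs k)).symm ▸ hls k) hsum hsqrt k) k
  have hβα : β - α = m⁻¹ := by rw [hα, hβ, ← sub_div]; simp
  have hc : (β - α) / (β * (2 * (R ^ 2 / g) ^ α / θ ^ m⁻¹))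
      = θ ^ m⁻¹ / ((p + 1) * (R ^ 2 / g) ^ α) := by
    rw [hβα, hβ, hp1]
    field_simp
  rw [hc, hβα] at hgrowth
  rw [hm, ← hpow R hR.le]
  calc θ * g ^ q / ((p + 1) ^ m * R ^ (2 * q)) * ((k + 1 : ℕ) : ℝ) ^ m
      = (θ ^ m⁻¹ / ((p + 1) * (R ^ 2 / g) ^ α) * (k + 1)) ^ m := by
        conv_rhs => rw [Real.mul_rpow (by positivity) (by positivity),
          Real.div_rpow (by positivity) (by positivity),
          Real.mul_rpow (by positivity) (by positivity),
          Real.rpow_inv_rpow hθ.le hm_pos.ne', ← Real.rpow_mul (by positivity),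
          div_mul_cancel₀ _ hm_pos.ne', Real.div_rpow (by positivity) hg.le,
          ← Real.rpow_natCast, ← Real.rpow_mul hR.le]
        push_cast
        field_simp
    _ ≤ (A (k + 1) ^ m⁻¹) ^ m := Real.rpow_le_rpow (by positivity) hgrowth hm_pos.le
    _ = A (k + 1) := Real.rpow_inv_rpow (hA _) hm_pos.ne'

lemma div_four_mul_sq_le_of_sum_sqrt_le {θ : ℝ} (hθ : 0 ≤ θ) {A lam : ℕ → ℝ} (hA : ∀ k, 0 ≤ A k)
    (hlam : ∀ k, θ ≤ lam (k + 1)) (hsqrt : ∀ k, ∑ j ∈ range k, √(lam (j + 1)) ≤ 2 * √(A k))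
    (k : ℕ) : θ / 4 * k ^ 2 ≤ A k := by
  have h : k * √θ ≤ 2 * √(A k) := calc
    k * √θ = ∑ _j ∈ range k, √θ := by rw [sum_const, card_range, nsmul_eq_mul]
    _ ≤ ∑ j ∈ range k, √(lam (j + 1)) := sum_le_sum fun j _ => Real.sqrt_le_sqrt (hlam j)
    _ ≤ 2 * √(A k) := hsqrt k
  have := pow_le_pow_left₀ (by positivity) h 2
  rw [mul_pow, mul_pow, Real.sq_sqrt hθ, Real.sq_sqrt (hA k)] at this
  linarith

theorem stmt_11_general (d p : ℕ) (hp : 1 ≤ p)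
    (Φ : EuclideanSpace ℝ (Fin d) → ℝ)
    (σ θ : ℝ) (hσ : σ ∈ Set.Ioo (0:ℝ) 1) (hθ : 0 < θ)
    (xstar : EuclideanSpace ℝ (Fin d)) (hstar : ∀ y, Φ xstar ≤ Φ y)
    (x v w vt : ℕ → EuclideanSpace ℝ (Fin d)) (A eps lam a : ℕ → ℝ)
    -- Algorithm I
    (hA0 : A 0 = 0)
    (hapos : ∀ k : ℕ, 0 < a (k+1)) (hlampos : ∀ k : ℕ, 0 < lam (k+1))
    (haA : ∀ k : ℕ, (a (k+1)) ^ 2 = lam (k+1) * (A k + a (k+1)))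
    (hA : ∀ k : ℕ, A (k+1) = A k + a (k+1))
    (hvt : ∀ k : ℕ, vt k = (A k / A (k+1)) • x k + (a (k+1) / A (k+1)) • v k)
    (hw : ∀ k : ℕ, ∀ y : EuclideanSpace ℝ (Fin d),
      Φ (x (k+1)) + ⟪y - x (k+1), w (k+1)⟫ - eps (k+1) ≤ Φ y)
    (herr : ∀ k : ℕ,
      ‖lam (k+1) • w (k+1) + x (k+1) - vt k‖ ^ 2 + 2 * lam (k+1) * eps (k+1) ≤
        σ ^ 2 * ‖x (k+1) - vt k‖ ^ 2)
    (hls : ∀ k : ℕ, θ ≤ lam (k+1) * ‖x (k+1) - vt k‖ ^ (p - 1))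
    (hv : ∀ k : ℕ, v (k+1) = v k - a (k+1) • w (k+1))
    -- extra assumption for p ≥ 2
    (hne : 2 ≤ p → v 0 ≠ xstar) :
    ∀ k : ℕ, 1 ≤ k →
      (θ * (1 - σ ^ 2) ^ (((p:ℝ) - 1) / 2) /
          (((p:ℝ) + 1) ^ ((3 * (p:ℝ) + 1) / 2) * ‖v 0 - xstar‖ ^ (p - 1))) *
        (k:ℝ) ^ ((3 * (p:ℝ) + 1) / 2) ≤ A k := by
  have hAnn : ∀ k, 0 ≤ A k := fun k => by
    induction k with
    | zero => exact hA0.ge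
    | succ n ih => rw [hA n]; linarith [hapos n]
  have hApos : ∀ k, 0 < A (k + 1) := fun k => by rw [hA k]; linarith [hapos k, hAnn k]
  have hg : 0 < 1 - σ ^ 2 := by nlinarith [hσ.1, hσ.2]
  have hsqrt : ∀ k, ∑ j ∈ range k, √(lam (j + 1)) ≤ 2 * √(A k) := fun k => by
    simpa [hA0] using sum_range_le_sub_of_add_le (E := fun k => -(2 * √(A k)))
      (fun k => by
        have := sqrt_add_sqrt_div_two_le (hAnn k) (hapos k) (hlampos k).le (haA k)
        rw [hA k]; linarith) k
  have hsum : ∀ k, ∑ j ∈ range k, A (j + 1) / lam (j + 1) * ‖x (j + 1) - vt j‖ ^ 2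
      ≤ ‖v 0 - xstar‖ ^ 2 / (1 - σ ^ 2) := fun k => by
    have hdecr := sum_range_le_sub_of_add_le
      (E := fun k => A k * (Φ (x k) - Φ xstar) + ‖v k - xstar‖ ^ 2 / 2)
      (fun k => lyapunov_step (hAnn k) (hapos k) (hlampos k) (hA k) (haA k) (hvt k) (hw k)
        (herr k) (hv k)) k
    have hEk : 0 ≤ A k * (Φ (x k) - Φ xstar) := mul_nonneg (hAnn k) (sub_nonneg.2 (hstar _))
    rw [← mul_sum, hA0] at hdecr
    rw [le_div_iff₀' hg]
    simp only [zero_mul, zero_add] at hdecr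
    linarith [sq_nonneg ‖v k - xstar‖]
  intro k hk
  obtain ⟨n, rfl⟩ := Nat.exists_eq_add_of_le' hk
  rcases hp.eq_or_lt with rfl | hp2
  · norm_num
    simpa using div_four_mul_sq_le_of_sum_sqrt_le hθ.le hAnn (by simpa using hls) hsqrt (n + 1)
  · exact mul_rpow_le_of_large_step hp2 hθ (norm_pos_iff.2 (sub_ne_zero.2 (hne hp2))) hg hAnn
      hApos hlampos (fun _ => norm_nonneg _) hls hsum hsqrt n

/-- for sequences generated by Algorithm I (with `v0 ≠ x*` when `p ≥ 2`),
`A_k ≥ (θ(1−σ²)^{(p−1)/2}/((p+1)^{(3p+1)/2}‖v0−x*‖^{p−1})) k^{(3p+1)/2}` for `k ≥ 1`. -/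
theorem stmt_11 (d p : ℕ) (hd : 1 ≤ d) (hp : 1 ≤ p)
    (Φ : EuclideanSpace ℝ (Fin d) → ℝ)
    (hconv : ConvexOn ℝ Set.univ Φ) (hsmooth : ContDiff ℝ 2 Φ)
    (σ θ : ℝ) (hσ : σ ∈ Set.Ioo (0:ℝ) 1) (hθ : 0 < θ)
    (xstar : EuclideanSpace ℝ (Fin d)) (hstar : ∀ y, Φ xstar ≤ Φ y)
    (x v w vt : ℕ → EuclideanSpace ℝ (Fin d)) (A eps lam a : ℕ → ℝ)
    -- x* is the projection of v0 onto the set of minimizers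
    (hproj : ∀ z : EuclideanSpace ℝ (Fin d), (∀ y, Φ z ≤ Φ y) → ‖v 0 - xstar‖ ≤ ‖v 0 - z‖)
    -- Algorithm I
    (hA0 : A 0 = 0)
    (hapos : ∀ k : ℕ, 0 < a (k+1)) (hlampos : ∀ k : ℕ, 0 < lam (k+1))
    (hepsnn : ∀ k : ℕ, 0 ≤ eps (k+1))
    (haA : ∀ k : ℕ, (a (k+1)) ^ 2 = lam (k+1) * (A k + a (k+1)))
    (hA : ∀ k : ℕ, A (k+1) = A k + a (k+1))
    (hvt : ∀ k : ℕ, vt k = (A k / A (k+1)) • x k + (a (k+1) / A (k+1)) • v k)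
    (hw : ∀ k : ℕ, ∀ y : EuclideanSpace ℝ (Fin d),
      Φ (x (k+1)) + ⟪y - x (k+1), w (k+1)⟫ - eps (k+1) ≤ Φ y)
    (herr : ∀ k : ℕ,
      ‖lam (k+1) • w (k+1) + x (k+1) - vt k‖ ^ 2 + 2 * lam (k+1) * eps (k+1) ≤
        σ ^ 2 * ‖x (k+1) - vt k‖ ^ 2)
    (hls : ∀ k : ℕ, θ ≤ lam (k+1) * ‖x (k+1) - vt k‖ ^ (p - 1))
    (hv : ∀ k : ℕ, v (k+1) = v k - a (k+1) • w (k+1))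
    -- extra assumption for p ≥ 2
    (hne : 2 ≤ p → v 0 ≠ xstar) :
    ∀ k : ℕ, 1 ≤ k →
      (θ * (1 - σ ^ 2) ^ (((p:ℝ) - 1) / 2) /
          (((p:ℝ) + 1) ^ ((3 * (p:ℝ) + 1) / 2) * ‖v 0 - xstar‖ ^ (p - 1))) *
        (k:ℝ) ^ ((3 * (p:ℝ) + 1) / 2) ≤ A k :=
  stmt_11_general d p hp Φ σ θ hσ hθ xstar hstar x v w vt A eps lam a hA0 hapos hlampos haA hA hvt
    hw herr hls hv hne
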